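/- Existence and uniqueness of the stationary distribution: an irreducible aperiodic stochastic matrix W has a unique stationary distribution v with strictly positive components satisfying v_i = Σ_j v_j W_{ji} for all i. -/

import Mathlib

/-!
Since `W *ᵥ 1 = 1`, the matrix `W - 1` is singular, so some `x ≠ 0` satisfies `x ᵥ* W = x`.
For such `x` the triangle inequality gives `|x| ≤ |x| ᵥ* W` entrywise, and both sides have the
same total mass because the rows of `W` sum to one; hence `|x|` is stationary as well, and
normalising it gives a stationary distribution. If `W ^ k` has positive entries, a nonzero
nonnegative stationary vector is positive everywhere. Applied to `|x| + x` with `x = u - v`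
for two stationary distributions, this forces `x` to have constant sign, and as `∑ x = 0`,
`u = v`.
-/

open Finset

namespace Matrix

variable {n R : Type*} [Fintype n]

theorem eq_zero_or_forall_pos_of_vecMul_eq_self [Semiring R] [PartialOrder R]
    [IsStrictOrderedRing R] {P : Matrix n n R} (hP : ∀ i j, 0 < P i j) {y : n → R}
    (hy0 : 0 ≤ y) (hy : y ᵥ* P = y) : y = 0 ∨ ∀ i, 0 < y i := by
  refine or_iff_not_imp_left.mpr fun hne i => ?_
  obtain ⟨j, hj⟩ := Function.ne_iff.mp hne
  rw [← hy]
  exact sum_pos' (fun k _ => mul_nonneg (hy0 k) (hP k i).le)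
    ⟨j, mem_univ j, mul_pos ((hy0 j).lt_of_ne' hj) (hP j i)⟩

variable [DecidableEq n]

theorem vecMul_pow_eq_self [Semiring R] {M : Matrix n n R} {x : n → R} (hx : x ᵥ* M = x)
    (k : ℕ) : x ᵥ* M ^ k = x := by
  induction k with
  | zero => simp
  | succ k ih => rw [pow_succ, ← vecMul_vecMul, ih, hx]

theorem exists_ne_zero_vecMul_eq_self [CommRing R] [IsDomain R] [Nonempty n]
    {M : Matrix n n R} (hM : M *ᵥ 1 = 1) :
    ∃ x ≠ 0, x ᵥ* M = x := by
  have hdet : (M - 1).det = 0 :=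
    exists_mulVec_eq_zero_iff.mp ⟨1, one_ne_zero, by rw [sub_mulVec, hM, one_mulVec, sub_self]⟩
  obtain ⟨x, hx0, hx⟩ := exists_vecMul_eq_zero_iff.mpr hdet
  exact ⟨x, hx0, by rwa [vecMul_sub, vecMul_one, sub_eq_zero] at hx⟩

theorem sum_vecMul_of_mem_rowStochastic [Semiring R] [PartialOrder R] [IsOrderedRing R]
    {M : Matrix n n R} (hM : M ∈ rowStochastic R n) (x : n → R) :
    ∑ i, (x ᵥ* M) i = ∑ i, x i := by
  rw [← dotProduct_one, ← dotProduct_one, ← dotProduct_mulVec, hM.2]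

section LinearOrderedRing

variable [Ring R] [LinearOrder R] [IsStrictOrderedRing R] {M : Matrix n n R}

theorem abs_vecMul_eq_self (hM : M ∈ rowStochastic R n) {x : n → R} (hx : x ᵥ* M = x) :
    |x| ᵥ* M = |x| := by
  have hle : ∀ i, |x| i ≤ (|x| ᵥ* M) i := fun i =>
    calc |x| i = |∑ j, x j * M j i| := by rw [Pi.abs_apply]; nth_rw 1 [← hx]; rfl
      _ ≤ ∑ j, |x j * M j i| := abs_sum_le_sum_abs _ _
      _ = (|x| ᵥ* M) i := by
        simp only [abs_mul, abs_of_nonneg (hM.1 _ _)]; rfl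
  have hsum : ∑ i, |x| i = ∑ i, (|x| ᵥ* M) i := (sum_vecMul_of_mem_rowStochastic hM _).symm
  funext i
  exact ((sum_eq_sum_iff_of_le fun i _ => hle i).mp hsum i (mem_univ i)).symm

theorem eq_of_vecMul_eq_self_of_sum_eq (hM : M ∈ rowStochastic R n) {k : ℕ}
    (hk : ∀ i j, 0 < (M ^ k) i j) {u v : n → R} (hu : u ᵥ* M = u) (hv : v ᵥ* M = v)
    (hsum : ∑ i, u i = ∑ i, v i) : u = v := by
  set x := u - v
  have hx : x ᵥ* M = x := by rw [sub_vecMul, hu, hv]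
  have hx_sum : ∑ i, x i = 0 := by simp only [x, Pi.sub_apply, sum_sub_distrib, hsum, sub_self]
  have hy : (|x| + x) ᵥ* M ^ k = |x| + x :=
    vecMul_pow_eq_self (by rw [add_vecMul, abs_vecMul_eq_self hM hx, hx]) k
  have hy0 : 0 ≤ |x| + x := fun i => neg_le_iff_add_nonneg'.mp (neg_abs_le (x i))
  rw [← sub_eq_zero]
  funext i
  rcases eq_zero_or_forall_pos_of_vecMul_eq_self hk hy0 hy with hy_zero | hy_pos
  · have hx_nonpos : ∀ j, x j ≤ 0 := fun j => by
      by_contra! hxj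
      have := congrFun hy_zero j
      simp only [Pi.add_apply, Pi.abs_apply, Pi.zero_apply, abs_of_pos hxj] at this
      exact (add_pos hxj hxj).ne' this
    exact (sum_eq_zero_iff_of_nonpos fun j _ => hx_nonpos j).mp hx_sum i (mem_univ i)
  · have hx_pos : ∀ j, 0 < x j := fun j => by
      by_contra! hxj
      have := hy_pos j
      simp only [Pi.add_apply, Pi.abs_apply, abs_of_nonpos hxj, neg_add_cancel] at this
      exact this.false
    exact (sum_eq_zero_iff_of_nonneg fun j _ => (hx_pos j).le).mp hx_sum i (mem_univ i)

end LinearOrderedRing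

theorem exists_mem_stdSimplex_vecMul_eq_self [Field R] [LinearOrder R] [IsStrictOrderedRing R]
    [Nonempty n] {M : Matrix n n R} (hM : M ∈ rowStochastic R n) :
    ∃ v ∈ stdSimplex R n, v ᵥ* M = v := by
  obtain ⟨x, hx0, hx⟩ := exists_ne_zero_vecMul_eq_self hM.2
  obtain ⟨j, hj⟩ := Function.ne_iff.mp hx0
  have hmass : 0 < ∑ i, |x i| :=
    sum_pos' (fun i _ => abs_nonneg (x i)) ⟨j, mem_univ j, abs_pos.mpr hj⟩
  refine ⟨(∑ i, |x i|)⁻¹ • |x|, ⟨fun i => ?_, ?_⟩, ?_⟩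
  · exact smul_nonneg (inv_nonneg.mpr hmass.le) (abs_nonneg (x i))
  · simp only [Pi.smul_apply, Pi.abs_apply, smul_eq_mul, ← mul_sum, inv_mul_cancel₀ hmass.ne']
  · rw [smul_vecMul, abs_vecMul_eq_self hM hx]

end Matrix

open Matrix in
/-- Perron–Frobenius for stochastic matrices: an irreducible aperiodic row-stochastic
matrix has a unique stationary distribution, and it has strictly positive components.
(Primitivity — some power has all entries positive — is equivalent to irreducibility
plus aperiodicity for stochastic matrices.) -/
theorem stationary_distribution_exists_unique (N : ℕ) (hN : 0 < N)
    (W : Matrix (Fin N) (Fin N) ℝ) (hWnonneg : ∀ i j, 0 ≤ W i j)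
    (hWrow : ∀ i, ∑ j, W i j = 1)
    (hWprim : ∃ k : ℕ, ∀ i j, 0 < (W ^ k) i j) :
    ∃ v : Fin N → ℝ,
      (∀ j, 0 < v j) ∧ (∑ j, v j = 1) ∧ (∀ i, v i = ∑ j, v j * W j i) ∧
      ∀ u : Fin N → ℝ, (∀ j, 0 ≤ u j) → (∑ j, u j = 1) →
        (∀ i, u i = ∑ j, u j * W j i) → u = v := by
  have hW : W ∈ rowStochastic ℝ (Fin N) := mem_rowStochastic_iff_sum.mpr ⟨hWnonneg, hWrow⟩
  have hstat (u : Fin N → ℝ) : (∀ i, u i = ∑ j, u j * W j i) ↔ u ᵥ* W = u := by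
    simp only [funext_iff, vecMul, dotProduct, eq_comm]
  obtain ⟨k, hk⟩ := hWprim
  have : Nonempty (Fin N) := ⟨⟨0, hN⟩⟩
  obtain ⟨v, ⟨hv0, hv1⟩, hv⟩ := exists_mem_stdSimplex_vecMul_eq_self hW
  have hv_pos : ∀ j, 0 < v j :=
    (eq_zero_or_forall_pos_of_vecMul_eq_self hk hv0 (vecMul_pow_eq_self hv k)).resolve_left
      fun h => by simp [h] at hv1
  refine ⟨v, hv_pos, hv1, (hstat v).mpr hv, fun u _ hu1 hu => ?_⟩
  exact eq_of_vecMul_eq_self_of_sum_eq hW hk ((hstat u).mp hu) hv (hu1.trans hv1.symm)
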